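/- The assignment A ↦ type(A) induces a bijection from the set of equivalence classes of EL-charts onto P_{m,n,d}. -/

import Mathlib

/-!
In a copy `ℤ_(τ)`, an EL-chart `A` meets each residue class mod `n` at most once in
`B = A ∖ (A + n)`, at the minimum of `A` in that class, and `A = B + nℕ`. The sequence `b_j`
satisfies `b_{j+1} ≡ b_j + m_j (mod n)`, so `b_{τ+id} ≡ b_τ + i·m`; as `m` is a unit mod `n`,
`b_0, …, b_{dn-1}` hit every pair (copy, residue) exactly once, hence enumerate `B`, and `A`
is determined by `b_0` and the type. The inequalities defining `P_{m,n,d}` say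
`b_{kd} ≥ b_0 = min B_(0)`, with equality at `k = n` because `b_{nd} ≡ b_0`. Conversely a tuple
in `P_{m,n,d}` defines a walk `b_j` whose translates `b_j + nℕ`, `j < dn`, form an EL-chart of
that type.
-/

namespace ELChart

/-- An EL-chart (for parameters `d`, `n` and `mfun τ = m_τ`): a non-empty subset
`A ⊆ ℤ^(d) = (ℤ/dℤ) × ℤ` which is bounded below and satisfies `f(A) ⊆ A` and `A + n ⊆ A`,
where `f (τ, x) = (τ + 1, x + m_τ)`. -/
def IsChart (d n : ℕ) (mfun : ZMod d → ℤ) (A : Set (ZMod d × ℤ)) : Prop :=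
  A.Nonempty ∧ (∃ c : ℤ, ∀ p ∈ A, c ≤ p.2) ∧
    (∀ p ∈ A, ((p.1 + 1 : ZMod d), p.2 + mfun p.1) ∈ A) ∧
    (∀ p ∈ A, (p.1, p.2 + (n : ℤ)) ∈ A)

/-- `B = A ∖ (A + n)`. -/
def Bset (d n : ℕ) (A : Set (ZMod d × ℤ)) : Set (ZMod d × ℤ) :=
  {p | p ∈ A ∧ (p.1, p.2 - (n : ℤ)) ∉ A}

/-- The shift `A + z` of a subset of `ℤ^(d)`. -/
def shift (d : ℕ) (A : Set (ZMod d × ℤ)) (z : ℤ) : Set (ZMod d × ℤ) :=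
  (fun p : ZMod d × ℤ => (p.1, p.2 + z)) '' A

/-- Two EL-charts are equivalent if they differ by a shift. -/
def ChartEquiv (d : ℕ) (A A' : Set (ZMod d × ℤ)) : Prop :=
  ∃ z : ℤ, shift d A z = A'

/-- The sequence `b 0, b 1, …` associated with an EL-chart: `b 0 = min B_(0)` and `b (i+1)`
is the unique element of `B` of the form `f (b i) − c * n` with `c` a non-negative integer. -/
noncomputable def bseq (d n : ℕ) (mfun : ZMod d → ℤ) (A : Set (ZMod d × ℤ)) :
    ℕ → ZMod d × ℤ
  | 0 => ((0 : ZMod d), sInf {x : ℤ | ((0 : ZMod d), x) ∈ Bset d n A})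
  | i + 1 =>
    ((bseq d n mfun A i).1 + 1,
      sInf {y : ℤ | ((bseq d n mfun A i).1 + 1, y) ∈ Bset d n A ∧
        ((bseq d n mfun A i).2 + mfun (bseq d n mfun A i).1 - y) % (n : ℤ) = 0 ∧
        y ≤ (bseq d n mfun A i).2 + mfun (bseq d n mfun A i).1})

/-- The entry `μ'_k` (for `1 ≤ k ≤ d*n`) of the type of an EL-chart: the non-negative integer
with `b k = f (b (k-1)) − μ'_k * n`. -/
noncomputable def typeInt (d n : ℕ) (mfun : ZMod d → ℤ) (A : Set (ZMod d × ℤ)) (k : ℕ) : ℤ :=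
  ((bseq d n mfun A (k - 1)).2 + mfun (bseq d n mfun A (k - 1)).1
    - (bseq d n mfun A k).2) / (n : ℤ)

/-- The type of an EL-chart as a tuple: `μ'_{τ,i} = μ'_{τ + (i−1)d}` where the `Fin d`-index
`τ` corresponds to `τ + 1 ∈ {1, …, d}` and the `Fin n`-index `i` to `i + 1 ∈ {1, …, n}`. -/
noncomputable def typeTup (d n : ℕ) (mfun : ZMod d → ℤ) (A : Set (ZMod d × ℤ)) :
    Fin d → Fin n → ℤ :=
  fun τ i => typeInt d n mfun A (τ.val + 1 + i.val * d)

/-- The entry `μ'_{τ',i'}` of the type of an EL-chart attached to an element `p = b_{τ',i'}`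
of `B`: if `q ∈ B` is the (unique) predecessor of `p`, i.e. the element with
`p = f q − c * n` for a non-negative integer `c`, then `muOf p = c`. -/
noncomputable def muOf (d n : ℕ) (mfun : ZMod d → ℤ) (A : Set (ZMod d × ℤ))
    (p : ZMod d × ℤ) : ℤ :=
  (sInf {y : ℤ | ((p.1 - 1 : ZMod d), y) ∈ Bset d n A ∧
      (y + mfun (p.1 - 1) - p.2) % (n : ℤ) = 0 ∧ p.2 ≤ y + mfun (p.1 - 1)}
    + mfun (p.1 - 1) - p.2) / (n : ℤ)

/-- The `i`-th largest element `b̃_{τ,i}` of `B_(τ)` (1-indexed: `i ∈ {1, …, n}`): the unique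
element of `B_(τ)` with exactly `i − 1` elements of `B_(τ)` above it. -/
noncomputable def btilde (d n : ℕ) (A : Set (ZMod d × ℤ)) (τ : ZMod d) (i : ℕ) : ℤ :=
  sInf {y : ℤ | (τ, y) ∈ Bset d n A ∧
    Set.ncard {z : ℤ | (τ, z) ∈ Bset d n A ∧ y < z} = i - 1}

/-- The cotype of an EL-chart as a tuple: `μ̃_{τ,i} = μ'_{τ',i'}` where `b̃_{τ,i} = b_{τ',i'}`,
i.e. the type entry attached to the `i`-th largest element of `B_(τ)`. -/
noncomputable def cotypeTup (d n : ℕ) (mfun : ZMod d → ℤ) (A : Set (ZMod d × ℤ)) :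
    Fin d → Fin n → ℤ :=
  fun τ i =>
    muOf d n mfun A (((τ.val + 1 : ℕ) : ZMod d),
      btilde d n A ((τ.val + 1 : ℕ) : ZMod d) (i.val + 1))

/-- Membership in `P_{m,n,d}`: all entries are non-negative and
`Σ_{i=1}^k Σ_{τ=1}^d μ_{τ,i} ≤ k*m/n` for `k = 1, …, n`, with equality for `k = n`. -/
def memP (d n m : ℕ) (μ : Fin d → Fin n → ℤ) : Prop :=
  (∀ τ i, 0 ≤ μ τ i) ∧
    (∀ k : ℕ, 1 ≤ k → k ≤ n →
      (n : ℤ) * ∑ τ : Fin d, ∑ i : Fin n, (if i.val + 1 ≤ k then μ τ i else 0)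
        ≤ (k : ℤ) * (m : ℤ)) ∧
    (∑ τ : Fin d, ∑ i : Fin n, μ τ i) = (m : ℤ)

/-- An EL-chart is normalised if `Σ_{b ∈ B_(0)} |b| = n(n−1)/2`. -/
def IsNormalised (d n : ℕ) (A : Set (ZMod d × ℤ)) : Prop :=
  ∑ᶠ x ∈ {x : ℤ | ((0 : ZMod d), x) ∈ Bset d n A}, x = ((n * (n - 1) / 2 : ℕ) : ℤ)

/-- The dominant rearrangement of a tuple: each component is sorted weakly decreasingly. -/
def domOf (d n : ℕ) (μ : Fin d → Fin n → ℤ) : Fin d → Fin n → ℤ :=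
  fun τ i => μ τ (Tuple.sort (fun j => -(μ τ j)) i)

/-- A tuple is dominant if each of its `d` components is weakly decreasing. -/
def IsDom (d n : ℕ) (μ : Fin d → Fin n → ℤ) : Prop :=
  ∀ τ : Fin d, ∀ i j : Fin n, i ≤ j → μ τ j ≤ μ τ i

end ELChart

open ELChart

namespace ELChart

open Finset

variable {d n m : ℕ} {mfun : ZMod d → ℤ} {A : Set (ZMod d × ℤ)}

theorem sum_range_mul_eq_sum_sum {M : Type*} [AddCommMonoid M] (F : ℕ → M) (k d : ℕ) :
    ∑ j ∈ range (k * d), F j = ∑ i ∈ range k, ∑ τ ∈ range d, F (i * d + τ) := by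
  induction k with
  | zero => simp
  | succ k ih => rw [Nat.succ_mul, sum_range_add, ih, sum_range_succ]

theorem sum_range_natCast_zmod [NeZero d] {M : Type*} [AddCommMonoid M] (g : ZMod d → M) :
    ∑ j ∈ range d, g j = ∑ τ, g τ := by
  obtain ⟨k, rfl⟩ := Nat.exists_eq_succ_of_ne_zero (NeZero.ne d)
  rw [sum_range]
  exact Fintype.sum_congr _ _ fun i => congrArg g (Fin.cast_val_eq_self i)

theorem sum_range_mul_add_natCast [NeZero d] {M : Type*} [AddCommMonoid M] (g : ZMod d → M)
    (a : ZMod d) (t : ℕ) : ∑ j ∈ range (t * d), g (a + j) = t • ∑ τ, g τ := by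
  have period (i : ℕ) : ∑ τ ∈ range d, g (a + ((i * d + τ : ℕ) : ZMod d)) = ∑ τ, g τ := by
    simp only [Nat.cast_add, Nat.cast_mul, ZMod.natCast_self, mul_zero, zero_add]
    rw [sum_range_natCast_zmod (fun τ => g (a + τ))]
    exact Equiv.sum_comp (Equiv.addLeft a) g
  simp only [sum_range_mul_eq_sum_sum, period, sum_const, card_range]

theorem sum_ite_le_eq_sum_range {M : Type*} [AddCommMonoid M] (F : ℕ → M) {k : ℕ}
    (hk : k ≤ n) :
    ∑ τ : Fin d, ∑ i : Fin n, (if i.val + 1 ≤ k then F (τ + 1 + i * d) else 0)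
      = ∑ j ∈ range (k * d), F (j + 1) := by
  rw [sum_comm, sum_range_mul_eq_sum_sum, Fin.sum_univ_eq_sum_range
    (fun i => ∑ τ : Fin d, if i + 1 ≤ k then F (τ + 1 + i * d) else 0)]
  simp only [sum_ite_irrel, sum_const_zero, ← sum_filter]
  rw [show (range n).filter (· + 1 ≤ k) = range k by ext; simp; omega]
  refine sum_congr rfl fun i _ => ?_
  rw [Fin.sum_univ_eq_sum_range (fun τ => F (τ + 1 + i * d))]
  exact sum_congr rfl fun τ _ => by ring_nf

/-- The recursion `b_{j+1} = f(b_j) − c_{j+1}·n` of the paper, `b_j` lying in the copy `j mod d`.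
-/
def IsWalk (n : ℕ) (mfun : ZMod d → ℤ) (c x : ℕ → ℤ) : Prop :=
  ∀ j : ℕ, x (j + 1) = x j + mfun j - n * c (j + 1)

section Walk

variable {c x : ℕ → ℤ}

theorem IsWalk.eq_add_sum (hx : IsWalk n mfun c x) (a k : ℕ) :
    x (a + k) = x a + ∑ j ∈ range k, mfun ↑(a + j) - n * ∑ j ∈ range k, c (a + j + 1) := by
  induction k with
  | zero => simp
  | succ k ih => rw [← add_assoc, hx, ih, sum_range_succ, sum_range_succ]; ring

theorem IsWalk.eq_add_mul [NeZero d] (hsum : ∑ τ, mfun τ = m) (hx : IsWalk n mfun c x)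
    (a i : ℕ) :
    x (a + i * d) = x a + i * m - n * ∑ j ∈ range (i * d), c (a + j + 1) := by
  rw [hx.eq_add_sum]
  push_cast
  rw [sum_range_mul_add_natCast, hsum, nsmul_eq_mul]

theorem IsWalk.cast_add_mul [NeZero d] (hsum : ∑ τ, mfun τ = m) (hx : IsWalk n mfun c x)
    (a i : ℕ) : (x (a + i * d) : ZMod n) = x a + i * m := by
  rw [hx.eq_add_mul hsum]
  simp

theorem IsWalk.mul_sum_ite [NeZero d] (hsum : ∑ τ, mfun τ = m) (hx : IsWalk n mfun c x)
    {k : ℕ} (hk : k ≤ n) :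
    n * ∑ τ : Fin d, ∑ i : Fin n, (if i.val + 1 ≤ k then c (τ + 1 + i * d) else 0)
      = x 0 + k * m - x (k * d) := by
  rw [sum_ite_le_eq_sum_range c hk]
  have h := hx.eq_add_mul hsum 0 k
  simp only [zero_add] at h
  linarith

theorem IsWalk.eq_add_of_eqOn {c' x' : ℕ → ℤ} (hx : IsWalk n mfun c x)
    (hx' : IsWalk n mfun c' x') {N : ℕ} (hc : ∀ j < N, c' (j + 1) = c (j + 1)) :
    ∀ k ≤ N, x' k = x k + (x' 0 - x 0) := by
  intro k hk
  induction k with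
  | zero => ring
  | succ k ih => rw [hx, hx', ih (by omega), hc k (by omega)]; ring

theorem IsWalk.injective_residue [NeZero d] (hmn : m.Coprime n) (hsum : ∑ τ, mfun τ = m)
    (hx : IsWalk n mfun c x) :
    Function.Injective fun j : Fin (d * n) => ((j : ZMod d), (x j : ZMod n)) := by
  rintro ⟨j, hj⟩ ⟨j', hj'⟩ h
  obtain ⟨hτ, hr⟩ := Prod.mk.inj h
  have hmod : j % d = j' % d := (ZMod.natCast_eq_natCast_iff' j j' d).1 hτ
  simp only at hr
  rw [← Nat.mod_add_div' j d, ← Nat.mod_add_div' j' d, hmod, hx.cast_add_mul hsum,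
    hx.cast_add_mul hsum, add_right_inj,
    ((ZMod.isUnit_iff_coprime m n).2 hmn).mul_left_inj, ZMod.natCast_eq_natCast_iff',
    Nat.mod_eq_of_lt (Nat.div_lt_of_lt_mul hj), Nat.mod_eq_of_lt (Nat.div_lt_of_lt_mul hj')] at hr
  refine Fin.ext (show j = j' from ?_)
  rw [← Nat.mod_add_div' j d, ← Nat.mod_add_div' j' d, hmod, hr]

theorem IsWalk.eq_of_residue_eq [NeZero d] (hmn : m.Coprime n) (hsum : ∑ τ, mfun τ = m)
    (hx : IsWalk n mfun c x) {j j' : ℕ} (hj : j < d * n) (hj' : j' < d * n)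
    (hτ : (j : ZMod d) = j') (hr : (x j : ZMod n) = x j') : j = j' :=
  congrArg Fin.val (hx.injective_residue hmn hsum (a₁ := ⟨j, hj⟩) (a₂ := ⟨j', hj'⟩)
    (Prod.ext hτ hr))

theorem IsWalk.exists_residue_eq [NeZero d] [NeZero n] (hmn : m.Coprime n)
    (hsum : ∑ τ, mfun τ = m) (hx : IsWalk n mfun c x) (τ : ZMod d) (r : ℤ) :
    ∃ j < d * n, (j : ZMod d) = τ ∧ (x j : ZMod n) = r := by
  have hbij := (Fintype.bijective_iff_injective_and_card _).2
    ⟨hx.injective_residue hmn hsum, by simp⟩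
  obtain ⟨⟨j, hj⟩, h⟩ := hbij.2 (τ, (r : ZMod n))
  exact ⟨j, hj, congrArg Prod.fst h, congrArg Prod.snd h⟩

end Walk

theorem mem_add_nat_mul (hadd : ∀ p ∈ A, (p.1, p.2 + (n : ℤ)) ∈ A) {τ : ZMod d} {y : ℤ}
    (h : (τ, y) ∈ A) (k : ℕ) : (τ, y + k * n) ∈ A := by
  induction k with
  | zero => simpa using h
  | succ k ih => simpa [add_mul, ← add_assoc] using hadd _ ih

section Stable

variable [NeZero n]

theorem mem_of_cast_eq_of_le (hadd : ∀ p ∈ A, (p.1, p.2 + (n : ℤ)) ∈ A) {τ : ZMod d}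
    {b y : ℤ} (hb : (τ, b) ∈ A) (hyb : (y : ZMod n) = b) (hle : b ≤ y) : (τ, y) ∈ A := by
  obtain ⟨k, hk⟩ := (ZMod.intCast_eq_intCast_iff_dvd_sub b y n).1 hyb.symm
  have hk0 : 0 ≤ k := (mul_nonneg_iff_of_pos_left (by exact_mod_cast NeZero.pos n)).1
    (hk ▸ sub_nonneg.2 hle)
  lift k to ℕ using hk0
  convert mem_add_nat_mul hadd hb k using 2
  linarith

theorem exists_mem_Bset_le (hbdd : ∃ c : ℤ, ∀ p ∈ A, c ≤ p.2) {τ : ZMod d} {y : ℤ}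
    (hy : (τ, y) ∈ A) : ∃ b, (τ, b) ∈ Bset d n A ∧ (y : ZMod n) = b ∧ b ≤ y := by
  set S := {b : ℤ | (τ, b) ∈ A ∧ (y : ZMod n) = b ∧ b ≤ y}
  obtain ⟨c, hc⟩ := hbdd
  have hS : BddBelow S := ⟨c, fun b hb => hc _ hb.1⟩
  obtain ⟨hmem, hcast, hle⟩ : sInf S ∈ S := Int.csInf_mem ⟨y, hy, rfl, le_rfl⟩ hS
  refine ⟨sInf S, ⟨hmem, fun hlt => ?_⟩, hcast, hle⟩
  have : sInf S ≤ sInf S - n := csInf_le hS ⟨hlt, by simp [hcast], by linarith⟩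
  linarith [(Nat.cast_pos.2 (NeZero.pos n) : (0 : ℤ) < n)]

theorem eq_of_mem_Bset (hadd : ∀ p ∈ A, (p.1, p.2 + (n : ℤ)) ∈ A) {τ : ZMod d} {b b' : ℤ}
    (hb : (τ, b) ∈ Bset d n A) (hb' : (τ, b') ∈ Bset d n A) (h : (b : ZMod n) = b') :
    b = b' := by
  wlog hle : b ≤ b' generalizing b b'
  · exact (this hb' hb h.symm (le_of_not_ge hle)).symm
  refine hle.eq_or_lt.resolve_right fun hlt => hb'.2 ?_
  have hdvd := (ZMod.intCast_eq_intCast_iff_dvd_sub b b' n).1 h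
  have hn : (n : ℤ) ≤ b' - b := Int.le_of_dvd (by linarith) hdvd
  exact mem_of_cast_eq_of_le hadd hb.1 (by simp [h]) (by linarith)

theorem mem_iff_exists_mem_Bset (hbdd : ∃ c : ℤ, ∀ p ∈ A, c ≤ p.2)
    (hadd : ∀ p ∈ A, (p.1, p.2 + (n : ℤ)) ∈ A) {τ : ZMod d} {y : ℤ} :
    (τ, y) ∈ A ↔ ∃ b, (τ, b) ∈ Bset d n A ∧ (y : ZMod n) = b ∧ b ≤ y :=
  ⟨exists_mem_Bset_le hbdd, fun ⟨_, hb, hyb, hle⟩ => mem_of_cast_eq_of_le hadd hb.1 hyb hle⟩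

end Stable

theorem mem_shift {z : ℤ} {p : ZMod d × ℤ} : p ∈ shift d A z ↔ (p.1, p.2 - z) ∈ A :=
  ⟨by rintro ⟨q, hq, rfl⟩; simpa using hq, fun h => ⟨_, h, by simp⟩⟩

theorem mem_Bset_shift {z : ℤ} {τ : ZMod d} {y : ℤ} :
    (τ, y) ∈ Bset d n (shift d A z) ↔ (τ, y - z) ∈ Bset d n A := by
  simp only [Bset, Set.mem_ofPred_eq, mem_shift, sub_right_comm]

theorem bseq_fst (k : ℕ) : (bseq d n mfun A k).1 = k := by
  induction k with
  | zero => simp [bseq]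
  | succ k ih => simp [bseq, ih]

theorem typeInt_succ (k : ℕ) : typeInt d n mfun A (k + 1)
    = ((bseq d n mfun A k).2 + mfun k - (bseq d n mfun A (k + 1)).2) / n := by
  simp only [typeInt, Nat.add_sub_cancel, bseq_fst]

theorem typeTup_apply (τ : Fin d) (i : Fin n) :
    typeTup d n mfun A τ i = typeInt d n mfun A (τ + i * d + 1) := by
  rw [typeTup, Nat.add_right_comm]

theorem typeInt_succ_eq_of_typeTup_eq [NeZero d] {A' : Set (ZMod d × ℤ)}
    (h : typeTup d n mfun A = typeTup d n mfun A') {j : ℕ} (hj : j < d * n) :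
    typeInt d n mfun A (j + 1) = typeInt d n mfun A' (j + 1) := by
  have := congrFun (congrFun h ⟨j % d, Nat.mod_lt _ (NeZero.pos d)⟩)
    ⟨j / d, Nat.div_lt_of_lt_mul hj⟩
  simpa only [typeTup_apply, Nat.mod_add_div'] using this

def ofSeq (d n : ℕ) (x : ℕ → ℤ) : Set (ZMod d × ℤ) :=
  {p | ∃ j < d * n, (j : ZMod d) = p.1 ∧ (p.2 : ZMod n) = x j ∧ x j ≤ p.2}

section OfSeq

variable {c x : ℕ → ℤ}

theorem ofSeq_eq_shift {x' : ℕ → ℤ} {z : ℤ} (h : ∀ j < d * n, x' j = x j + z) :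
    ofSeq d n x' = shift d (ofSeq d n x) z := by
  ext ⟨τ, y⟩
  simp only [mem_shift, ofSeq, Set.mem_ofPred_eq]
  refine exists_congr fun j => and_congr_right fun hj => ?_
  simp only [h j hj, Int.cast_add, Int.cast_sub, ← sub_eq_iff_eq_add, le_sub_iff_add_le]

variable [NeZero d] [NeZero n]

theorem exists_lt_of_le_of_apply_eq (hper : x (d * n) = x 0) {k : ℕ} (hk : k ≤ d * n) :
    ∃ j < d * n, (j : ZMod d) = k ∧ x j = x k := by
  rcases hk.lt_or_eq with hk | rfl
  · exact ⟨k, hk, rfl, rfl⟩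
  · exact ⟨0, Nat.mul_pos (NeZero.pos d) (NeZero.pos n), by simp, hper.symm⟩

theorem isChart_ofSeq (hx : IsWalk n mfun c x) (hc : ∀ j, 0 ≤ c (j + 1))
    (hper : x (d * n) = x 0) : IsChart d n mfun (ofSeq d n x) := by
  have hdn : 0 < d * n := Nat.mul_pos (NeZero.pos d) (NeZero.pos n)
  refine ⟨⟨(0, x 0), 0, hdn, by simp, rfl, le_rfl⟩, ?_, ?_, ?_⟩
  · obtain ⟨c0, hc0⟩ := ((range (d * n)).image x).bddBelow
    exact ⟨c0, fun p ⟨j, hj, _, _, hle⟩ =>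
      (hc0 (mem_coe.2 (mem_image_of_mem x (mem_range.2 hj)))).trans hle⟩
  · rintro ⟨τ, y⟩ ⟨j, hj, rfl, hr, hle⟩
    simp only at hr hle
    obtain ⟨j', hj', hτ', hx'⟩ := exists_lt_of_le_of_apply_eq hper (Nat.succ_le_of_lt hj)
    have hstep : x (j + 1) ≤ x j + mfun j := by
      rw [hx j]; nlinarith [hc j, (Nat.cast_nonneg n : (0 : ℤ) ≤ n)]
    refine ⟨j', hj', by simpa using hτ', ?_, by simp only; linarith⟩
    simp [hx', hx j, hr]
  · rintro ⟨τ, y⟩ ⟨j, hj, hτ, hr, hle⟩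
    exact ⟨j, hj, hτ, by simp [hr], by simp only; linarith [(Nat.cast_nonneg n : (0 : ℤ) ≤ n)]⟩

theorem mem_Bset_ofSeq (hmn : m.Coprime n) (hsum : ∑ τ, mfun τ = m)
    (hx : IsWalk n mfun c x) {τ : ZMod d} {y : ℤ} :
    (τ, y) ∈ Bset d n (ofSeq d n x) ↔ ∃ j < d * n, (j : ZMod d) = τ ∧ x j = y := by
  constructor
  · rintro ⟨⟨j, hj, hτ, hr, hle⟩, hnot⟩
    refine ⟨j, hj, hτ, hle.eq_or_lt.resolve_right fun hlt => hnot ⟨j, hj, hτ, by simp [hr], ?_⟩⟩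
    have := Int.le_of_dvd (sub_pos.2 hlt) ((ZMod.intCast_eq_intCast_iff_dvd_sub _ _ n).1 hr.symm)
    simp only
    linarith
  · rintro ⟨j, hj, rfl, rfl⟩
    refine ⟨⟨j, hj, rfl, rfl, le_rfl⟩, fun ⟨j', hj', hτ', hr', hle'⟩ => ?_⟩
    have := hx.eq_of_residue_eq hmn hsum hj' hj hτ' (by simpa using hr'.symm)
    subst this
    simp only at hle'
    linarith [(Nat.cast_pos.2 (NeZero.pos n) : (0 : ℤ) < n)]

end OfSeq

namespace IsChart

theorem exists_mem [NeZero d] (hA : IsChart d n mfun A) (τ : ZMod d) : ∃ y, (τ, y) ∈ A := by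
  obtain ⟨p, hp⟩ := hA.1
  have reach (k : ℕ) : ∃ y, (p.1 + k, y) ∈ A := by
    induction k with
    | zero => exact ⟨p.2, by simpa using hp⟩
    | succ k ih =>
      obtain ⟨y, hy⟩ := ih
      exact ⟨_, by simpa [add_assoc] using hA.2.2.1 _ hy⟩
  simpa [ZMod.natCast_zmod_val] using reach (τ - p.1).val

variable [NeZero n]

theorem isLeast_bseq_zero [NeZero d] (hA : IsChart d n mfun A) :
    IsLeast {y | ((0 : ZMod d), y) ∈ Bset d n A} (bseq d n mfun A 0).2 := by
  obtain ⟨y, hy⟩ := hA.exists_mem 0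
  obtain ⟨b, hb, -⟩ := exists_mem_Bset_le (n := n) hA.2.1 hy
  obtain ⟨c, hc⟩ := hA.2.1
  have hbdd : BddBelow {y | ((0 : ZMod d), y) ∈ Bset d n A} := ⟨c, fun y hy => hc _ hy.1⟩
  exact ⟨Int.csInf_mem ⟨b, hb⟩ hbdd, fun y hy => csInf_le hbdd hy⟩

theorem bseq_succ_of_mem (hA : IsChart d n mfun A) {k : ℕ}
    (hk : ((k : ZMod d), (bseq d n mfun A k).2) ∈ Bset d n A) :
    (((k + 1 : ℕ) : ZMod d), (bseq d n mfun A (k + 1)).2) ∈ Bset d n A ∧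
      ((bseq d n mfun A (k + 1)).2 : ZMod n) = (bseq d n mfun A k).2 + mfun k ∧
      (bseq d n mfun A (k + 1)).2 ≤ (bseq d n mfun A k).2 + mfun k := by
  obtain ⟨b, hb, hrb, hle⟩ := exists_mem_Bset_le (n := n) hA.2.1 (hA.2.2.1 _ hk.1)
  have hset : {y | ((k : ZMod d) + 1, y) ∈ Bset d n A ∧
      ((bseq d n mfun A k).2 + mfun k - y) % (n : ℤ) = 0 ∧
      y ≤ (bseq d n mfun A k).2 + mfun k} = {b} := by
    ext y
    simp only [Set.mem_ofPred_eq, Set.mem_singleton_iff, ← Int.dvd_iff_emod_eq_zero,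
      ← ZMod.intCast_eq_intCast_iff_dvd_sub]
    constructor
    · rintro ⟨hy, hyr, -⟩
      exact eq_of_mem_Bset hA.2.2.2 hy hb (hyr.trans hrb)
    · rintro rfl
      exact ⟨hb, hrb.symm, hle⟩
  have hbseq : (bseq d n mfun A (k + 1)).2 = b := by
    rw [bseq, bseq_fst, hset, csInf_singleton]
  rw [hbseq, Nat.cast_succ, ← Int.cast_add]
  exact ⟨hb, hrb.symm, hle⟩

theorem mem_Bset_bseq [NeZero d] (hA : IsChart d n mfun A) (k : ℕ) :
    ((k : ZMod d), (bseq d n mfun A k).2) ∈ Bset d n A := by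
  induction k with
  | zero => simpa using hA.isLeast_bseq_zero.1
  | succ k ih => exact (hA.bseq_succ_of_mem ih).1

theorem cast_bseq_succ [NeZero d] (hA : IsChart d n mfun A) (k : ℕ) :
    ((bseq d n mfun A (k + 1)).2 : ZMod n) = (bseq d n mfun A k).2 + mfun k :=
  (hA.bseq_succ_of_mem (hA.mem_Bset_bseq k)).2.1

theorem bseq_succ_le [NeZero d] (hA : IsChart d n mfun A) (k : ℕ) :
    (bseq d n mfun A (k + 1)).2 ≤ (bseq d n mfun A k).2 + mfun k :=
  (hA.bseq_succ_of_mem (hA.mem_Bset_bseq k)).2.2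

theorem isWalk_bseq [NeZero d] (hA : IsChart d n mfun A) :
    IsWalk n mfun (typeInt d n mfun A) fun k => (bseq d n mfun A k).2 := by
  intro k
  have hdvd : (n : ℤ) ∣ (bseq d n mfun A k).2 + mfun k - (bseq d n mfun A (k + 1)).2 :=
    (ZMod.intCast_eq_intCast_iff_dvd_sub _ _ n).1 (by push_cast; exact hA.cast_bseq_succ k)
  rw [typeInt_succ, Int.mul_ediv_cancel' hdvd]
  ring

theorem typeInt_succ_nonneg [NeZero d] (hA : IsChart d n mfun A) (k : ℕ) :
    0 ≤ typeInt d n mfun A (k + 1) := by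
  rw [typeInt_succ]
  exact Int.ediv_nonneg (by linarith [hA.bseq_succ_le k]) (Int.natCast_nonneg n)

theorem bseq_snd_eq_of_mem_Bset [NeZero d] (hA : IsChart d n mfun A) {x : ℕ → ℤ} {N : ℕ}
    (h0 : ∀ y, ((0 : ZMod d), y) ∈ Bset d n A → x 0 ≤ y)
    (hB : ∀ k ≤ N, ((k : ZMod d), x k) ∈ Bset d n A)
    (hstep : ∀ k < N, (x (k + 1) : ZMod n) = x k + mfun k) :
    ∀ k ≤ N, (bseq d n mfun A k).2 = x k := by
  intro k hk
  induction k with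
  | zero => exact hA.isLeast_bseq_zero.unique ⟨by simpa using hB 0 hk, h0⟩
  | succ k ih =>
    refine eq_of_mem_Bset hA.2.2.2 (hA.mem_Bset_bseq _) (hB _ hk) ?_
    rw [hA.cast_bseq_succ, ih (by omega), hstep k hk]

theorem mem_Bset_iff [NeZero d] (hmn : m.Coprime n) (hsum : ∑ τ, mfun τ = m)
    (hA : IsChart d n mfun A) {τ : ZMod d} {y : ℤ} :
    (τ, y) ∈ Bset d n A ↔ ∃ j < d * n, (j : ZMod d) = τ ∧ (bseq d n mfun A j).2 = y := by
  constructor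
  · intro hy
    obtain ⟨j, hj, hτ, hr⟩ := hA.isWalk_bseq.exists_residue_eq hmn hsum τ y
    exact ⟨j, hj, hτ, eq_of_mem_Bset hA.2.2.2 (hτ ▸ hA.mem_Bset_bseq j) hy hr⟩
  · rintro ⟨j, -, rfl, rfl⟩
    exact hA.mem_Bset_bseq j

theorem eq_ofSeq [NeZero d] (hmn : m.Coprime n) (hsum : ∑ τ, mfun τ = m)
    (hA : IsChart d n mfun A) : A = ofSeq d n fun k => (bseq d n mfun A k).2 := by
  ext ⟨τ, y⟩
  rw [mem_iff_exists_mem_Bset hA.2.1 hA.2.2.2]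
  simp only [ofSeq, Set.mem_ofPred_eq, hA.mem_Bset_iff hmn hsum]
  constructor
  · rintro ⟨_, ⟨j, hj, hτ, rfl⟩, hyb, hle⟩
    exact ⟨j, hj, hτ, hyb, hle⟩
  · rintro ⟨j, hj, hτ, hyb, hle⟩
    exact ⟨_, ⟨j, hj, hτ, rfl⟩, hyb, hle⟩

theorem typeTup_memP [NeZero d] (hsum : ∑ τ, mfun τ = m) (hA : IsChart d n mfun A) :
    memP d n m (typeTup d n mfun A) := by
  have hprefix (k : ℕ) (hk : k ≤ n) :
      n * ∑ τ : Fin d, ∑ i : Fin n, (if i.val + 1 ≤ k then typeTup d n mfun A τ i else 0)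
        = (bseq d n mfun A 0).2 + k * m - (bseq d n mfun A (k * d)).2 :=
    hA.isWalk_bseq.mul_sum_ite hsum hk
  have hmem (k : ℕ) : ((0 : ZMod d), (bseq d n mfun A (k * d)).2) ∈ Bset d n A := by
    simpa using hA.mem_Bset_bseq (k * d)
  refine ⟨fun τ i => by rw [typeTup_apply]; exact hA.typeInt_succ_nonneg _,
    fun k _ hk => by linarith [hprefix k hk, hA.isLeast_bseq_zero.2 (hmem k)], ?_⟩
  have hper : (bseq d n mfun A (n * d)).2 = (bseq d n mfun A 0).2 :=
    eq_of_mem_Bset hA.2.2.2 (hmem n) hA.isLeast_bseq_zero.1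
      (by simpa using hA.isWalk_bseq.cast_add_mul hsum 0 n)
  have htotal := hprefix n le_rfl
  simp only [Nat.add_one_le_iff, Fin.is_lt, if_true, hper] at htotal
  exact mul_left_cancel₀ (Nat.cast_ne_zero.2 (NeZero.ne n)) (by linarith)

theorem typeTup_eq_of_chartEquiv [NeZero d] {A' : Set (ZMod d × ℤ)} (hA : IsChart d n mfun A)
    (hA' : IsChart d n mfun A') (h : ChartEquiv d A A') :
    typeTup d n mfun A = typeTup d n mfun A' := by
  obtain ⟨z, rfl⟩ := h
  have hb (k : ℕ) : (bseq d n mfun (shift d A z) k).2 = (bseq d n mfun A k).2 + z :=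
    hA'.bseq_snd_eq_of_mem_Bset (x := fun k => (bseq d n mfun A k).2 + z) (N := k)
      (fun y hy => by linarith [hA.isLeast_bseq_zero.2 (mem_Bset_shift.1 hy)])
      (fun j _ => mem_Bset_shift.2 (by simpa using hA.mem_Bset_bseq j))
      (fun j _ => by push_cast; rw [hA.cast_bseq_succ]; ring) k le_rfl
  funext τ i
  simp only [typeTup_apply, typeInt_succ, hb]
  ring_nf

theorem chartEquiv_of_typeTup_eq [NeZero d] (hmn : m.Coprime n) (hsum : ∑ τ, mfun τ = m)
    {A' : Set (ZMod d × ℤ)} (hA : IsChart d n mfun A) (hA' : IsChart d n mfun A')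
    (h : typeTup d n mfun A = typeTup d n mfun A') : ChartEquiv d A A' := by
  have hb := hA.isWalk_bseq.eq_add_of_eqOn hA'.isWalk_bseq (N := d * n)
    fun j hj => (typeInt_succ_eq_of_typeTup_eq h hj).symm
  refine ⟨(bseq d n mfun A' 0).2 - (bseq d n mfun A 0).2, ?_⟩
  calc shift d A _ = shift d (ofSeq d n fun k => (bseq d n mfun A k).2) _ := by
        rw [← hA.eq_ofSeq hmn hsum]
    _ = ofSeq d n fun k => (bseq d n mfun A' k).2 := (ofSeq_eq_shift fun j hj => hb j hj.le).symm
    _ = A' := (hA'.eq_ofSeq hmn hsum).symm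

end IsChart

def walkOf (n : ℕ) (mfun : ZMod d → ℤ) (c : ℕ → ℤ) : ℕ → ℤ
  | 0 => 0
  | j + 1 => walkOf n mfun c j + mfun j - n * c (j + 1)

section Construction

variable [NeZero d] [NeZero n]

def typeSeq (μ : Fin d → Fin n → ℤ) (k : ℕ) : ℤ :=
  μ (Fin.ofNat d (k - 1)) (Fin.ofNat n ((k - 1) / d))

theorem typeSeq_apply (μ : Fin d → Fin n → ℤ) (τ : Fin d) (i : Fin n) :
    typeSeq μ (τ + i * d + 1) = μ τ i := by
  simp only [typeSeq, Nat.add_sub_cancel]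
  congr 1 <;> ext
  · simp [Nat.mod_eq_of_lt τ.isLt]
  · simp [Nat.add_mul_div_right _ _ (NeZero.pos d), Nat.div_eq_of_lt τ.isLt]

theorem exists_isChart_typeTup_eq (hmn : m.Coprime n) (hsum : ∑ τ, mfun τ = m)
    {μ : Fin d → Fin n → ℤ} (hμ : memP d n m μ) :
    ∃ A, IsChart d n mfun A ∧ typeTup d n mfun A = μ := by
  set x := walkOf n mfun (typeSeq μ)
  have hx : IsWalk n mfun (typeSeq μ) x := fun _ => rfl
  have hprefix (k : ℕ) (hk : k ≤ n) :
      n * ∑ τ : Fin d, ∑ i : Fin n, (if i.val + 1 ≤ k then μ τ i else 0) = k * m - x (k * d) := by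
    simpa [Nat.add_right_comm _ 1, typeSeq_apply, x, walkOf] using hx.mul_sum_ite hsum hk
  have hper : x (d * n) = x 0 := by
    have htotal := hprefix n le_rfl
    simp only [Nat.add_one_le_iff, Fin.is_lt, if_true, hμ.2.2, mul_comm d n] at htotal ⊢
    simp only [x, walkOf]
    linarith
  have hA := isChart_ofSeq hx (fun j => hμ.1 _ _) hper
  have hb : ∀ k ≤ d * n, (bseq d n mfun (ofSeq d n x) k).2 = x k := by
    refine hA.bseq_snd_eq_of_mem_Bset (fun y hy => ?_) (fun k hk => ?_)
      (fun k _ => by rw [hx]; simp)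
    · obtain ⟨j, hj, hτ, rfl⟩ := (mem_Bset_ofSeq hmn hsum hx).1 hy
      obtain ⟨i, rfl⟩ := (ZMod.natCast_eq_zero_iff j d).1 hτ
      have hi : i ≤ n := (Nat.lt_of_mul_lt_mul_left hj).le
      rcases i.eq_zero_or_pos with rfl | hi0
      · simp
      · rw [mul_comm]
        linarith [hprefix i hi, hμ.2.1 i hi0 hi, show x 0 = 0 from rfl]
    · obtain ⟨j, hj, hτ, hxj⟩ := exists_lt_of_le_of_apply_eq hper hk
      exact hτ ▸ hxj ▸ (mem_Bset_ofSeq hmn hsum hx).2 ⟨j, hj, rfl, rfl⟩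
  refine ⟨ofSeq d n x, hA, funext fun τ => funext fun i => ?_⟩
  have hj : (τ : ℕ) + i * d + 1 ≤ d * n := by nlinarith [τ.isLt, i.isLt]
  rw [typeTup_apply, typeInt_succ, hb _ hj, hb _ (by omega), hx, ← typeSeq_apply μ τ i,
    show ∀ a b : ℤ, a - (a - n * b) = n * b by intros; ring]
  exact Int.mul_ediv_cancel_left _ (Nat.cast_ne_zero.2 (NeZero.ne n))

end Construction

end ELChart

theorem type_bijection_classes_P_general
    (d n m : ℕ) [NeZero d] (hn : 0 < n) (hmn : Nat.Coprime m n)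
    (mfun : ZMod d → ℤ) (hsum : ∑ τ : ZMod d, mfun τ = (m : ℤ)) :
    (∀ A A' : Set (ZMod d × ℤ), IsChart d n mfun A → IsChart d n mfun A' →
      ChartEquiv d A A' → typeTup d n mfun A = typeTup d n mfun A') ∧
    (∀ A : Set (ZMod d × ℤ), IsChart d n mfun A → memP d n m (typeTup d n mfun A)) ∧
    (∀ A A' : Set (ZMod d × ℤ), IsChart d n mfun A → IsChart d n mfun A' →
      typeTup d n mfun A = typeTup d n mfun A' → ChartEquiv d A A') ∧
    (∀ μ : Fin d → Fin n → ℤ, memP d n m μ →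
      ∃ A : Set (ZMod d × ℤ), IsChart d n mfun A ∧ typeTup d n mfun A = μ) := by
  have : NeZero n := ⟨hn.ne'⟩
  exact ⟨fun _ _ hA hA' h => hA.typeTup_eq_of_chartEquiv hA' h,
    fun _ hA => hA.typeTup_memP hsum,
    fun _ _ hA hA' h => hA.chartEquiv_of_typeTup_eq hmn hsum hA' h,
    fun _ hμ => exists_isChart_typeTup_eq hmn hsum hμ⟩

/-- The assignment `A ↦ type A` induces a bijection from the set of
equivalence classes of EL-charts onto `P_{m,n,d}` : the type is invariant under equivalence,
it lies in `P_{m,n,d}`, two EL-charts with the same type are equivalent, and every element of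
`P_{m,n,d}` is the type of some EL-chart. -/
theorem type_bijection_classes_P
    (d n m : ℕ) [NeZero d] (hn : 0 < n) (hm : 0 < m) (hmn : Nat.Coprime m n)
    (mfun : ZMod d → ℤ) (hsum : ∑ τ : ZMod d, mfun τ = (m : ℤ)) :
    (∀ A A' : Set (ZMod d × ℤ), IsChart d n mfun A → IsChart d n mfun A' →
      ChartEquiv d A A' → typeTup d n mfun A = typeTup d n mfun A') ∧
    (∀ A : Set (ZMod d × ℤ), IsChart d n mfun A → memP d n m (typeTup d n mfun A)) ∧
    (∀ A A' : Set (ZMod d × ℤ), IsChart d n mfun A → IsChart d n mfun A' →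
      typeTup d n mfun A = typeTup d n mfun A' → ChartEquiv d A A') ∧
    (∀ μ : Fin d → Fin n → ℤ, memP d n m μ →
      ∃ A : Set (ZMod d × ℤ), IsChart d n mfun A ∧ typeTup d n mfun A = μ) :=
  type_bijection_classes_P_general d n m hn hmn mfun hsum
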